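/- arXiv:2401.14868 — 2 statements merged into one kernel-verified Lean document; each statement's English description precedes it below -/
import Mathlib

section
/- (Gaussian conditioning.) Let u ~ N(m, E) in ℝ^D and, conditionally on u, x ~ N(v + H·u, D₀) in ℝ^{D'}, with E and D₀ symmetric positive definite. Then the conditional law of u given x is Gaussian with mean m + K(x − v − H·m) and covariance (I − K·H)·E, where K := E·Hᵀ·(D₀ + H·E·Hᵀ)^{-1}. -/
open Matrix MeasureTheory

/-- Multivariate Gaussian density with mean `m` and covariance `C`. -/
noncomputable def gauss {n : Type*} [Fintype n] [DecidableEq n] (m : n → ℝ)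
    (C : Matrix n n ℝ) (x : n → ℝ) : ℝ :=
  (2 * Real.pi) ^ (-(Fintype.card n : ℝ) / 2) * C.det ^ (-(1 : ℝ) / 2) *
    Real.exp (-(1 / 2) * ((x - m) ⬝ᵥ (C⁻¹ *ᵥ (x - m))))

private lemma dp_transpose {k l : ℕ} (A : Matrix (Fin k) (Fin l) ℝ)
    (p : Fin l → ℝ) (q : Fin k → ℝ) : p ⬝ᵥ (Aᵀ *ᵥ q) = q ⬝ᵥ (A *ᵥ p) := by
  rw [mulVec_transpose, dotProduct_comm, ← dotProduct_mulVec]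

private lemma dp_expand_sub {k : ℕ} (A : Matrix (Fin k) (Fin k) ℝ) (p q : Fin k → ℝ) :
    (p - q) ⬝ᵥ (A *ᵥ (p - q))
      = p ⬝ᵥ (A *ᵥ p) - p ⬝ᵥ (A *ᵥ q) - q ⬝ᵥ (A *ᵥ p) + q ⬝ᵥ (A *ᵥ q) := by
  rw [mulVec_sub, dotProduct_sub, sub_dotProduct, sub_dotProduct]
  ring

/-- Gaussian conditioning: if `u ~ N(m, E)` and `x | u ~ N(v + H u, D₀)`, then
`u | x ~ N(m + K (x − v − H m), (I − K H) E)` with `K = E Hᵀ (D₀ + H E Hᵀ)⁻¹`,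
expressed as a factorisation of the joint density. -/
theorem gaussian_conditioning (D D' : ℕ)
    (m : Fin D → ℝ) (E : Matrix (Fin D) (Fin D) ℝ) (hE : E.PosDef) (hEs : E.IsSymm)
    (v : Fin D' → ℝ) (H : Matrix (Fin D') (Fin D) ℝ)
    (D₀ : Matrix (Fin D') (Fin D') ℝ) (hD₀ : D₀.PosDef) (hD₀s : D₀.IsSymm) :
    ∀ (u : Fin D → ℝ) (x : Fin D' → ℝ),
      gauss m E u * gauss (v + H *ᵥ u) D₀ x
        = gauss (v + H *ᵥ m) (D₀ + H * E * Hᵀ) x *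
          gauss (m + (E * Hᵀ * (D₀ + H * E * Hᵀ)⁻¹) *ᵥ (x - v - H *ᵥ m))
            ((1 - (E * Hᵀ * (D₀ + H * E * Hᵀ)⁻¹) * H) * E) u := by
  intro u x
  set S : Matrix (Fin D') (Fin D') ℝ := D₀ + H * E * Hᵀ with hSdef
  set K : Matrix (Fin D) (Fin D') ℝ := E * Hᵀ * S⁻¹ with hKdef
  set M : Matrix (Fin D) (Fin D) ℝ := E⁻¹ + Hᵀ * D₀⁻¹ * H with hMdef
  have hEt : Eᵀ = E := hEs
  have hD₀t : D₀ᵀ = D₀ := hD₀s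
  -- S is positive definite
  have hHEH : (H * E * Hᵀ).PosSemidef := by
    have := hE.posSemidef.mul_mul_conjTranspose_same H
    rwa [conjTranspose_eq_transpose_of_trivial] at this
  have hS : S.PosDef := hD₀.add_posSemidef hHEH
  have hSt : Sᵀ = S := by
    rw [hSdef, transpose_add, hD₀t, transpose_mul, transpose_mul, transpose_transpose, hEt,
      Matrix.mul_assoc]
  -- invertibility
  have hEdet : IsUnit E.det := hE.det_pos.ne'.isUnit
  have hD₀det : IsUnit D₀.det := hD₀.det_pos.ne'.isUnit
  have hSdet : IsUnit S.det := hS.det_pos.ne'.isUnit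
  have hEit : (E⁻¹)ᵀ = E⁻¹ := by rw [transpose_nonsing_inv, hEt]
  have hD₀it : (D₀⁻¹)ᵀ = D₀⁻¹ := by rw [transpose_nonsing_inv, hD₀t]
  have hSit : (S⁻¹)ᵀ = S⁻¹ := by rw [transpose_nonsing_inv, hSt]
  have hMt : Mᵀ = M := by
    rw [hMdef, transpose_add, hEit, transpose_mul, transpose_mul, transpose_transpose,
      hD₀it, Matrix.mul_assoc]
  -- key matrix identities
  have hX : H * (E * Hᵀ) = S - D₀ := by rw [hSdef, Matrix.mul_assoc]; abel
  have hHK : H * K = 1 - D₀ * S⁻¹ := by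
    have h1 : H * K = H * (E * Hᵀ) * S⁻¹ := by rw [hKdef]; simp only [Matrix.mul_assoc]
    rw [h1, hX, Matrix.sub_mul, mul_nonsing_inv _ hSdet]
  have hMK : M * K = Hᵀ * D₀⁻¹ := by
    have h1 : M * K = Hᵀ * S⁻¹ + Hᵀ * (D₀⁻¹ * ((H * (E * Hᵀ)) * S⁻¹)) := by
      rw [hMdef, hKdef, Matrix.add_mul,
        show E⁻¹ * (E * Hᵀ * S⁻¹) = E⁻¹ * (E * (Hᵀ * S⁻¹)) by simp only [Matrix.mul_assoc],
        nonsing_inv_mul_cancel_left _ _ hEdet]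
      simp only [Matrix.mul_assoc]
    rw [h1, hX, Matrix.sub_mul, mul_nonsing_inv _ hSdet, Matrix.mul_sub,
      nonsing_inv_mul_cancel_left _ _ hD₀det, mul_one, Matrix.mul_sub]
    abel
  have hCM : ((1 - K * H) * E) * M = 1 := by
    have hEM : E * M = 1 + E * (Hᵀ * (D₀⁻¹ * H)) := by
      rw [hMdef, Matrix.mul_add, mul_nonsing_inv _ hEdet]
      simp only [Matrix.mul_assoc]
    have hKHE : K * (H * (E * (Hᵀ * (D₀⁻¹ * H)))) = E * (Hᵀ * (D₀⁻¹ * H)) - K * H := by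
      have h1 : H * (E * (Hᵀ * (D₀⁻¹ * H))) = (S - D₀) * (D₀⁻¹ * H) := by
        rw [← hX]; simp only [Matrix.mul_assoc]
      rw [h1, Matrix.sub_mul, Matrix.mul_sub, mul_nonsing_inv_cancel_left _ _ hD₀det,
        hKdef, show E * Hᵀ * S⁻¹ * (S * (D₀⁻¹ * H)) = E * (Hᵀ * (S⁻¹ * (S * (D₀⁻¹ * H))))
          by simp only [Matrix.mul_assoc], nonsing_inv_mul_cancel_left _ _ hSdet]
    calc ((1 - K * H) * E) * M = E * M - K * (H * (E * M)) := by
          rw [Matrix.sub_mul, Matrix.one_mul, Matrix.sub_mul]; simp only [Matrix.mul_assoc]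
      _ = 1 := by
          rw [hEM, Matrix.mul_add, Matrix.mul_one, Matrix.mul_add,
            show H * (E * (Hᵀ * (D₀⁻¹ * H))) = H * (E * (Hᵀ * (D₀⁻¹ * H))) from rfl, hKHE]
          abel
  have hCinv : ((1 - K * H) * E)⁻¹ = M := inv_eq_right_inv hCM
  -- determinant identity
  have hdet : ((1 - K * H) * E).det * S.det = E.det * D₀.det := by
    have hdetCM : ((1 - K * H) * E).det * M.det = 1 := by rw [← det_mul, hCM, det_one]
    have hSfact : S = D₀ * (1 + (D₀⁻¹ * (H * E)) * Hᵀ) := by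
      rw [Matrix.mul_add, Matrix.mul_one, ← Matrix.mul_assoc,
        show D₀ * (D₀⁻¹ * (H * E)) = H * E from mul_nonsing_inv_cancel_left _ _ hD₀det, hSdef]
    have hME : M * E = 1 + Hᵀ * (D₀⁻¹ * (H * E)) := by
      rw [hMdef, Matrix.add_mul, nonsing_inv_mul _ hEdet]
      simp only [Matrix.mul_assoc]
    have hdetS : S.det = D₀.det * (M.det * E.det) := by
      rw [hSfact, det_mul, det_one_add_mul_comm, ← det_mul, hME]
    rw [hdetS]
    calc ((1 - K * H) * E).det * (D₀.det * (M.det * E.det))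
        = (((1 - K * H) * E).det * M.det) * (E.det * D₀.det) := by ring
      _ = E.det * D₀.det := by rw [hdetCM, one_mul]
  -- vectors
  set a : Fin D → ℝ := u - m with hadef
  set b : Fin D' → ℝ := x - v - H *ᵥ m with hbdef
  have hu2 : x - (v + H *ᵥ u) = b - H *ᵥ a := by
    have h1 : H *ᵥ u = H *ᵥ m + H *ᵥ a := by rw [← mulVec_add, hadef, add_sub_cancel]
    rw [h1, hbdef]; abel
  have hu3 : u - (m + K *ᵥ b) = a - K *ᵥ b := by rw [hadef]; abel
  have hu4 : x - (v + H *ᵥ m) = b := by rw [hbdef]; abel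
  -- quadratic form identity
  set d : Fin D' → ℝ := H *ᵥ a with hddef
  set c : Fin D → ℝ := K *ᵥ b with hcdef
  set w : Fin D' → ℝ := D₀⁻¹ *ᵥ b with hwdef
  have hMa : M *ᵥ a = E⁻¹ *ᵥ a + Hᵀ *ᵥ (D₀⁻¹ *ᵥ d) := by
    rw [hMdef, add_mulVec]
    congr 1
    rw [hddef, mulVec_mulVec, mulVec_mulVec]
  have hMc : M *ᵥ c = Hᵀ *ᵥ w := by
    rw [hcdef, mulVec_mulVec, hMK, hwdef, ← mulVec_mulVec]
  have f1 : a ⬝ᵥ (M *ᵥ a) = a ⬝ᵥ (E⁻¹ *ᵥ a) + d ⬝ᵥ (D₀⁻¹ *ᵥ d) := by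
    rw [hMa, dotProduct_add, dp_transpose H a (D₀⁻¹ *ᵥ d), ← hddef,
      dotProduct_comm (D₀⁻¹ *ᵥ d) d]
  have f2 : a ⬝ᵥ (M *ᵥ c) = d ⬝ᵥ w := by
    rw [hMc, dp_transpose H a w, ← hddef, dotProduct_comm w d]
  have f3 : c ⬝ᵥ (M *ᵥ a) = d ⬝ᵥ w := by
    conv_lhs => rw [← hMt]
    rw [dp_transpose M c a, f2]
  have f4 : c ⬝ᵥ (M *ᵥ c) = b ⬝ᵥ w - b ⬝ᵥ (S⁻¹ *ᵥ b) := by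
    rw [hMc, dp_transpose H c w]
    have h1 : H *ᵥ c = b - D₀ *ᵥ (S⁻¹ *ᵥ b) := by
      rw [hcdef, mulVec_mulVec, hHK, sub_mulVec, one_mulVec, ← mulVec_mulVec]
    rw [h1, dotProduct_sub]
    have h2 : w ⬝ᵥ (D₀ *ᵥ (S⁻¹ *ᵥ b)) = b ⬝ᵥ (S⁻¹ *ᵥ b) := by
      conv_lhs => rw [← hD₀t]
      rw [dp_transpose D₀ w (S⁻¹ *ᵥ b), hwdef, mulVec_mulVec,
        mul_nonsing_inv _ hD₀det, one_mulVec, dotProduct_comm (S⁻¹ *ᵥ b) b]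
    rw [h2, dotProduct_comm w b]
  have f5 : b ⬝ᵥ (D₀⁻¹ *ᵥ d) = d ⬝ᵥ w := by
    conv_lhs => rw [← hD₀it]
    rw [dp_transpose D₀⁻¹ b d, ← hwdef]
  have Q : a ⬝ᵥ (E⁻¹ *ᵥ a) + (b - H *ᵥ a) ⬝ᵥ (D₀⁻¹ *ᵥ (b - H *ᵥ a))
      = b ⬝ᵥ (S⁻¹ *ᵥ b) + (a - K *ᵥ b) ⬝ᵥ (M *ᵥ (a - K *ᵥ b)) := by
    rw [dp_expand_sub D₀⁻¹ b d, dp_expand_sub M a c, f1, f2, f3, f4, f5, ← hwdef]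
    ring
  -- determinant powers
  have hCdet : ((1 - K * H) * E).det = E.det * D₀.det / S.det :=
    (eq_div_iff hS.det_pos.ne').mpr hdet
  have hCdetpos : 0 < ((1 - K * H) * E).det := by
    rw [hCdet]; exact div_pos (mul_pos hE.det_pos hD₀.det_pos) hS.det_pos
  have hdetpow : E.det ^ (-(1:ℝ)/2) * D₀.det ^ (-(1:ℝ)/2)
      = S.det ^ (-(1:ℝ)/2) * ((1 - K * H) * E).det ^ (-(1:ℝ)/2) := by
    rw [← Real.mul_rpow hE.det_pos.le hD₀.det_pos.le,
      ← Real.mul_rpow hS.det_pos.le hCdetpos.le]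
    congr 1
    rw [mul_comm S.det]
    exact hdet.symm
  -- assemble
  simp only [gauss, Fintype.card_fin]
  rw [hCinv, hu2, hu3, hu4]
  have key : E.det ^ (-(1:ℝ)/2) * D₀.det ^ (-(1:ℝ)/2) *
      (Real.exp (-(1/2) * (a ⬝ᵥ (E⁻¹ *ᵥ a))) *
        Real.exp (-(1/2) * ((b - H *ᵥ a) ⬝ᵥ (D₀⁻¹ *ᵥ (b - H *ᵥ a)))))
      = S.det ^ (-(1:ℝ)/2) * ((1 - K * H) * E).det ^ (-(1:ℝ)/2) *
      (Real.exp (-(1/2) * (b ⬝ᵥ (S⁻¹ *ᵥ b))) *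
        Real.exp (-(1/2) * ((a - K *ᵥ b) ⬝ᵥ (M *ᵥ (a - K *ᵥ b))))) := by
    rw [hdetpow]
    congr 1
    rw [← Real.exp_add, ← Real.exp_add]
    congr 1
    linarith [Q]
  linear_combination ((2 * Real.pi) ^ (-(D:ℝ)/2) * (2 * Real.pi) ^ (-(D':ℝ)/2)) * key
end

section
/- (aMALA acceptance ratio factorisation.) Fix δ > 0, x⁰, x¹, u, g⁰, g¹ ∈ ℝ^D and set x̄ := (x⁰ + x¹)/2. Then the ratio [N(u; x¹ + (δ/2)g¹, (δ/2)I) · N(x⁰; u, (δ/2)I)] / [N(u; x⁰ + (δ/2)g⁰, (δ/2)I) · N(x¹; u, (δ/2)I)] equals [N(x⁰; x¹ + (δ/2)g¹, δI) / N(x¹; x⁰ + (δ/2)g⁰, δI)] · [N(u; x̄ + (δ/4)g¹, (δ/4)I) / N(u; x̄ + (δ/4)g⁰, (δ/4)I)]. -/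
/-!
Both products in the ratio are two-step isotropic Gaussian transitions `a → u → b` with
variance `δ/2` per step. Completing the square in `u` (the parallelogram law for `u - a` and
`b - u`) factors such a product as `N(b; a, δI) · N(u; (a + b)/2, (δ/4)I)`: a direct step times the
Brownian-bridge density of the intermediate point. For `a = x + (δ/2)g` the midpoint is
`x̄ + (δ/4)g`, so the ratio of the two products splits into the two stated ratios.
-/

open Matrix

variable {n : Type*} [Fintype n]

theorem Matrix.inv_smul_one {K : Type*} [DecidableEq n] [Field K] (c : K) :
    (c • (1 : Matrix n n K))⁻¹ = c⁻¹ • 1 := by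
  rcases eq_or_ne c 0 with rfl | hc
  · simp
  · exact inv_eq_right_inv (by rw [smul_mul_smul_comm, mul_inv_cancel₀ hc, one_mul, one_smul])

theorem two_mul_add_dotProduct_self {R : Type*} [CommRing R] (p q : n → R) :
    2 * (p ⬝ᵥ p + q ⬝ᵥ q) = (p + q) ⬝ᵥ (p + q) + (p - q) ⬝ᵥ (p - q) := by
  simp only [add_dotProduct, dotProduct_add, sub_dotProduct, dotProduct_sub, dotProduct_comm q p]
  ring

theorem dotProduct_self_sub_add_dotProduct_self_sub (a u b : n → ℝ) :
    (u - a) ⬝ᵥ (u - a) + (b - u) ⬝ᵥ (b - u) =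
      (b - a) ⬝ᵥ (b - a) / 2 + 2 * ((u - (a + b) / 2) ⬝ᵥ (u - (a + b) / 2)) := by
  have parallelogram := two_mul_add_dotProduct_self (u - a) (b - u)
  have hsum : u - a + (b - u) = b - a := by abel
  have hdiff : u - a - (b - u) = (2 : ℝ) • (u - (a + b) / 2) := by
    ext i
    simp only [Pi.sub_apply, Pi.smul_apply, Pi.div_apply, Pi.add_apply, Pi.ofNat_apply, smul_eq_mul]
    ring
  rw [hsum, hdiff, smul_dotProduct, dotProduct_smul, smul_eq_mul, smul_eq_mul] at parallelogram
  linear_combination parallelogram / 2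

noncomputable def isotropicGaussNormConst (N : ℕ) (c : ℝ) : ℝ :=
  (2 * Real.pi) ^ (-(N : ℝ) / 2) * (c ^ N) ^ (-(1 : ℝ) / 2)

theorem isotropicGaussNormConst_half_mul_self {c : ℝ} (hc : 0 ≤ c) (N : ℕ) :
    isotropicGaussNormConst N (c / 2) * isotropicGaussNormConst N (c / 2) =
      isotropicGaussNormConst N c * isotropicGaussNormConst N (c / 4) := by
  have hdet : ((c / 2) ^ N) ^ (-(1 : ℝ) / 2) * ((c / 2) ^ N) ^ (-(1 : ℝ) / 2) =
      (c ^ N) ^ (-(1 : ℝ) / 2) * ((c / 4) ^ N) ^ (-(1 : ℝ) / 2) := by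
    rw [← Real.mul_rpow (by positivity) (by positivity),
      ← Real.mul_rpow (by positivity) (by positivity), ← mul_pow, ← mul_pow]
    ring_nf
  simp only [isotropicGaussNormConst]
  linear_combination ((2 * Real.pi) ^ (-(N : ℝ) / 2)) ^ 2 * hdet

theorem gauss_smul_one [DecidableEq n] (c : ℝ) (m x : n → ℝ) :
    gauss m (c • 1) x = isotropicGaussNormConst (Fintype.card n) c *
      Real.exp (-(2 * c)⁻¹ * ((x - m) ⬝ᵥ (x - m))) := by
  rw [gauss, isotropicGaussNormConst, det_smul, det_one, mul_one, inv_smul_one, smul_mulVec,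
    one_mulVec, dotProduct_smul, smul_eq_mul, ← mul_assoc, mul_inv, one_div, neg_mul]

theorem gauss_mul_gauss_eq_gauss_mul_gauss_midpoint [DecidableEq n]
    {c : ℝ} (hc : 0 ≤ c) (a u b : n → ℝ) :
    gauss a ((c / 2) • 1) u * gauss u ((c / 2) • 1) b =
      gauss a (c • 1) b * gauss ((a + b) / 2) ((c / 4) • 1) u := by
  have hexponent :
      -(2 * (c / 2))⁻¹ * ((u - a) ⬝ᵥ (u - a)) + -(2 * (c / 2))⁻¹ * ((b - u) ⬝ᵥ (b - u)) =
        -(2 * c)⁻¹ * ((b - a) ⬝ᵥ (b - a)) +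
          -(2 * (c / 4))⁻¹ * ((u - (a + b) / 2) ⬝ᵥ (u - (a + b) / 2)) := by
    linear_combination (-c⁻¹) * dotProduct_self_sub_add_dotProduct_self_sub a u b
  simp only [gauss_smul_one]
  rw [mul_mul_mul_comm, ← Real.exp_add, hexponent, Real.exp_add,
    isotropicGaussNormConst_half_mul_self hc, mul_mul_mul_comm]

theorem gauss_langevin_mul_gauss [DecidableEq n] {c : ℝ} (hc : 0 ≤ c)
    (x g u y : n → ℝ) :
    gauss (x + (c / 2) • g) ((c / 2) • 1) u * gauss u ((c / 2) • 1) y =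
      gauss (x + (c / 2) • g) (c • 1) y * gauss ((x + y) / 2 + (c / 4) • g) ((c / 4) • 1) u := by
  have hmid : (x + (c / 2) • g + y) / 2 = (x + y) / 2 + (c / 4) • g := by
    ext i
    simp only [Pi.div_apply, Pi.add_apply, Pi.smul_apply, smul_eq_mul, Pi.ofNat_apply]
    ring
  rw [gauss_mul_gauss_eq_gauss_mul_gauss_midpoint hc, hmid]

/-- aMALA acceptance-ratio factorisation: with `x̄ = (x⁰+x¹)/2`,
`[N(u; x¹+(δ/2)g¹, (δ/2)I)·N(x⁰; u, (δ/2)I)] / [N(u; x⁰+(δ/2)g⁰, (δ/2)I)·N(x¹; u, (δ/2)I)]`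
equals
`[N(x⁰; x¹+(δ/2)g¹, δI)/N(x¹; x⁰+(δ/2)g⁰, δI)] · [N(u; x̄+(δ/4)g¹, (δ/4)I)/N(u; x̄+(δ/4)g⁰, (δ/4)I)]`. -/
theorem amala_acceptance_ratio_factorisation (D : ℕ) (δ : ℝ) (hδ : 0 < δ)
    (x₀ x₁ u g₀ g₁ : Fin D → ℝ) :
    (gauss (x₁ + (δ / 2) • g₁) ((δ / 2) • (1 : Matrix (Fin D) (Fin D) ℝ)) u *
        gauss u ((δ / 2) • 1) x₀) /
      (gauss (x₀ + (δ / 2) • g₀) ((δ / 2) • 1) u * gauss u ((δ / 2) • 1) x₁)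
    = (gauss (x₁ + (δ / 2) • g₁) (δ • 1) x₀ /
        gauss (x₀ + (δ / 2) • g₀) (δ • 1) x₁) *
      (gauss ((x₀ + x₁) / 2 + (δ / 4) • g₁) ((δ / 4) • 1) u /
        gauss ((x₀ + x₁) / 2 + (δ / 4) • g₀) ((δ / 4) • 1) u) := by
  rw [gauss_langevin_mul_gauss hδ.le, gauss_langevin_mul_gauss hδ.le, add_comm x₁ x₀,
    mul_div_mul_comm]
end
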